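/- For every n ≥ 2, the number of occurrences of the subsequence 2-1 (a 2 occurring before a 1, not necessarily adjacent) in C_n equals 2·4^{n-2} - n·2^{n-2}, and the same formula holds for D_n. -/

import Mathlib

/-- The pair `(C_n, D_n)` of sigma-words, with `C_0 = D_0 = []`,
`C_{k+1} = C_k · 1 · D_k`, `D_{k+1} = C_k · 2 · D_k`
(so `C_1 = [1]`, `D_1 = [2]`). -/
def sigmaCD : ℕ → List ℕ × List ℕ
  | 0 => ([], [])
  | k + 1 => ((sigmaCD k).1 ++ 1 :: (sigmaCD k).2, (sigmaCD k).1 ++ 2 :: (sigmaCD k).2)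

/-- The sigma-word `C_n`. -/
def sigmaC (n : ℕ) : List ℕ := (sigmaCD n).1

/-- The sigma-word `D_n`. -/
def sigmaD (n : ℕ) : List ℕ := (sigmaCD n).2

/-- Number of occurrences of `p` as a (not necessarily contiguous) subsequence of `w`,
counted with multiplicity of position sets. -/
def subseqCount (p w : List ℕ) : ℕ := (w.sublistsLen p.length).count p

/-- Number of occurrences of `p` as a factor (contiguous subword) of `w`,
i.e. the number of starting positions at which `p` occurs in `w`. -/
def factorCount (p w : List ℕ) : ℕ :=
  (List.range w.length).countP fun i => decide ((w.drop i).take p.length = p)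

/-! The `2-1` occurrences in `u ++ v` are those inside `u`, those inside `v`, and the
`(#2 in u) * (#1 in v)` crossing ones; write `S w` for their number in `w`. For `n ≥ 1`, `C_n`
has `m = 2^(n-1) - 1` letters `2` and `D_n` has `m` letters `1`, so `C_{n+1} = C_n 1 D_n` and
`D_{n+1} = C_n 2 D_n` both have `S(C_n) + S(D_n) + m (m + 1)` occurrences. Hence
`S(C_n) = S(D_n)` and `S(C_{n+1}) = 2 S(C_n) + m (m + 1)`, which solves to the closed form. -/

theorem List.count_singleton_sublistsLen_one {α : Type*} [DecidableEq α] (l : List α) (a : α) :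
    (l.sublistsLen 1).count [a] = l.count a := by
  rw [List.sublistsLen_one, List.count_map_of_injective _ _ List.singleton_injective,
    List.count_reverse]

theorem subseqCount_pair_cons (a b c : ℕ) (l : List ℕ) :
    subseqCount [a, b] (c :: l) = subseqCount [a, b] l + if c = a then l.count b else 0 := by
  unfold subseqCount
  rw [List.length_cons, List.length_singleton, List.sublistsLen_succ_cons, List.count_append]
  congr 1
  split_ifs with hc
  · rw [hc, List.count_map_of_injective _ _ List.cons_injective,
      List.count_singleton_sublistsLen_one]
  · exact List.count_eq_zero.2 fun h => by
      obtain ⟨_, _, h⟩ := List.mem_map.1 h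
      exact hc (List.cons_eq_cons.1 h).1

theorem subseqCount_pair_append (a b : ℕ) (u v : List ℕ) :
    subseqCount [a, b] (u ++ v) =
      subseqCount [a, b] u + subseqCount [a, b] v + u.count a * v.count b := by
  induction u with
  | nil => simp [subseqCount]
  | cons c u ih =>
    rw [List.cons_append, subseqCount_pair_cons, ih, subseqCount_pair_cons, List.count_cons,
      List.count_append]
    by_cases hc : c = a
    · simp only [hc, if_true, BEq.rfl]
      ring
    · simp [hc]

theorem sigmaC_succ (n : ℕ) : sigmaC (n + 1) = sigmaC n ++ 1 :: sigmaD n := rfl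

theorem sigmaD_succ (n : ℕ) : sigmaD (n + 1) = sigmaC n ++ 2 :: sigmaD n := rfl

theorem count_sigmaC_add_count_sigmaD {a : ℕ} (ha : a = 1 ∨ a = 2) (n : ℕ) :
    (sigmaC n).count a + (sigmaD n).count a + 1 = 2 ^ n := by
  induction n with
  | zero => rfl
  | succ n ih =>
    rw [sigmaC_succ, sigmaD_succ, pow_succ, ← ih]
    simp only [List.count_append, List.count_cons, beq_iff_eq]
    grind

theorem count_two_sigmaC_succ (n : ℕ) : (sigmaC (n + 1)).count 2 + 1 = 2 ^ n := by
  rw [sigmaC_succ, List.count_append, List.count_cons_of_ne (by decide),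
    count_sigmaC_add_count_sigmaD (Or.inr rfl)]

theorem count_one_sigmaD_succ (n : ℕ) : (sigmaD (n + 1)).count 1 + 1 = 2 ^ n := by
  rw [sigmaD_succ, List.count_append, List.count_cons_of_ne (by decide),
    count_sigmaC_add_count_sigmaD (Or.inl rfl)]

theorem count_two_sigmaC_eq_count_one_sigmaD (n : ℕ) :
    (sigmaC n).count 2 = (sigmaD n).count 1 := by
  cases n with
  | zero => rfl
  | succ n =>
    exact Nat.add_right_cancel ((count_two_sigmaC_succ n).trans (count_one_sigmaD_succ n).symm)

theorem subseqCount_sigmaD_eq_subseqCount_sigmaC (n : ℕ) :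
    subseqCount [2, 1] (sigmaD n) = subseqCount [2, 1] (sigmaC n) := by
  cases n with
  | zero => rfl
  | succ n =>
    rw [sigmaC_succ, sigmaD_succ, subseqCount_pair_append, subseqCount_pair_append,
      subseqCount_pair_cons, subseqCount_pair_cons, if_pos rfl, if_neg (by decide),
      List.count_cons_self, List.count_cons_of_ne (by decide), count_two_sigmaC_eq_count_one_sigmaD]
    ring

theorem subseqCount_sigmaC_succ (n : ℕ) :
    subseqCount [2, 1] (sigmaC (n + 1)) =
      2 * subseqCount [2, 1] (sigmaC n) + (sigmaC n).count 2 * ((sigmaC n).count 2 + 1) := by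
  rw [sigmaC_succ, subseqCount_pair_append, subseqCount_pair_cons,
    subseqCount_sigmaD_eq_subseqCount_sigmaC, List.count_cons_self,
    ← count_two_sigmaC_eq_count_one_sigmaD, if_neg (by decide)]
  ring

theorem subseqCount_sigmaC_add_two (k : ℕ) :
    subseqCount [2, 1] (sigmaC (k + 2)) + (k + 2) * 2 ^ k = 2 * 4 ^ k := by
  induction k with
  | zero => rfl
  | succ k ih =>
    have hm := count_two_sigmaC_succ (k + 1)
    have h4 : (4 : ℕ) ^ k = 2 ^ k * 2 ^ k := by rw [← mul_pow]; norm_num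
    rw [subseqCount_sigmaC_succ, hm, pow_succ 4, h4]
    rw [h4] at ih
    rw [pow_succ] at hm ⊢
    linear_combination 2 * ih + 2 ^ (k + 1) * hm

theorem subseq_21 (n : ℕ) (hn : 2 ≤ n) :
    subseqCount [2, 1] (sigmaC n) = 2 * 4 ^ (n - 2) - n * 2 ^ (n - 2) ∧
    subseqCount [2, 1] (sigmaD n) = 2 * 4 ^ (n - 2) - n * 2 ^ (n - 2) := by
  obtain ⟨k, rfl⟩ := Nat.exists_eq_add_of_le' hn
  have hC := subseqCount_sigmaC_add_two k
  rw [subseqCount_sigmaD_eq_subseqCount_sigmaC, Nat.add_sub_cancel]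
  exact ⟨by omega, by omega⟩
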